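/- Let l < k with gcd(l,k) = d, k = n d, n > 1, and a in GF(2^k)*. Then P_a(x)=x^{2^l+1}+x+a has exactly one zero in GF(2^k) if and only if Z_n(a) = 0 and C_n(a) != 0; moreover in this case the unique zero equals (a C_n(a)^{2^l-1})^{2^{k-1}}. -/

import Mathlib

/-- The sequence `C_1 = C_2 = 1`, `C_{i+2}(x) = C_{i+1}(x) + x^(2^(i*l)) * C_i(x)`
(with `C_0 = 0`), evaluated at `u`. -/
def Cseq (l : ℕ) {F : Type*} [Field F] (u : F) : ℕ → F
  | 0 => 0
  | 1 => 1
  | 2 => 1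
  | (i + 3) => Cseq l u (i + 2) + u ^ (2 ^ ((i + 1) * l)) * Cseq l u (i + 1)

/-- `Z_n(x) = C_{n+1}(x) + x * C_{n-1}(x)^(2^l)`, evaluated at `u`. -/
def Zseq (l n : ℕ) {F : Type*} [Field F] (u : F) : F :=
  Cseq l u (n + 1) + u * (Cseq l u (n - 1)) ^ (2 ^ l)

/-!
Write `σ y = y ^ 2 ^ l`; on `GF(2^k)` it has order exactly `n`. For a root `x` of `P_a`, the
partial norms `x · σx ⋯ σ^i x` satisfy the recurrence of the `C_i` and equal
`C_{i+1} x + a C_i^(2^l)`. Comparing `i = n - 1` with `i = n`, where `σ^n x = x`, gives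
`C_n x² + Z_n x + a C_n^(2^l) = 0`. If `C_n ≠ 0 = Z_n` this determines `x²`, and the element
it determines is indeed a root. If `C_n ≠ 0 ≠ Z_n`, the other root of this quadratic is a
second root of `P_a`. If `C_n = 0`, then `x² / a` has norm `1`, and the multiplicative and
additive Hilbert 90 for `σ` produce a second root of the form `x + s⁻¹`.
-/

open Finset Polynomial

section FrobeniusNormTrace

variable {M : Type*} (q : ℕ)

-- For `q = p ^ l` and `y ↦ y ^ q` of order `n`, these are the norm and trace to its fixed field.
def frobNorm [CommMonoid M] (n : ℕ) (y : M) : M := ∏ i ∈ range n, y ^ q ^ i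

def frobTrace [Semiring M] (n : ℕ) (y : M) : M := ∑ i ∈ range n, y ^ q ^ i

section CommMonoid

variable [CommMonoid M]

@[simp]
lemma frobNorm_zero (y : M) : frobNorm q 0 y = 1 := prod_range_zero _

lemma frobNorm_succ (n : ℕ) (y : M) : frobNorm q (n + 1) y = frobNorm q n y * y ^ q ^ n :=
  prod_range_succ _ _

lemma frobNorm_succ' (n : ℕ) (y : M) : frobNorm q (n + 1) y = y * frobNorm q n y ^ q := by
  simp only [frobNorm, prod_range_succ', pow_zero, pow_one, ← prod_pow, ← pow_mul, pow_succ]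
  rw [mul_comm]

lemma frobNorm_pow (n m : ℕ) (y : M) : frobNorm q n (y ^ m) = frobNorm q n y ^ m := by
  simp only [frobNorm, ← prod_pow, pow_right_comm]

lemma pow_pow_eq_mul_frobNorm {γ w : M} (h : γ ^ q = γ * w) (i : ℕ) :
    γ ^ q ^ i = γ * frobNorm q i w := by
  induction i with
  | zero => simp
  | succ i ih => rw [pow_succ, pow_mul, ih, mul_pow, h, frobNorm_succ', mul_assoc]

end CommMonoid

@[simp]
lemma frobTrace_zero [Semiring M] (y : M) : frobTrace q 0 y = 0 := sum_range_zero _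

lemma frobTrace_succ [Semiring M] (n : ℕ) (y : M) :
    frobTrace q (n + 1) y = frobTrace q n y + y ^ q ^ n :=
  sum_range_succ _ _

lemma frobNorm_div [DivisionCommMonoid M] (n : ℕ) (y z : M) :
    frobNorm q n (y / z) = frobNorm q n y / frobNorm q n z := by
  simp only [frobNorm, div_pow, prod_div_distrib]

lemma frobNorm_ne_zero [CommMonoidWithZero M] [NoZeroDivisors M] [Nontrivial M] {y : M}
    (hy : y ≠ 0) (n : ℕ) : frobNorm q n y ≠ 0 :=
  prod_ne_zero_iff.mpr fun _ _ => pow_ne_zero _ hy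

end FrobeniusNormTrace

lemma sum_range_succ_eq_of_eq {M : Type*} [AddCancelCommMonoid M] (f : ℕ → M) {n : ℕ}
    (h : f n = f 0) : ∑ i ∈ range n, f (i + 1) = ∑ i ∈ range n, f i :=
  add_right_cancel <| (sum_range_succ' f n).symm.trans (h ▸ sum_range_succ f n)

section Frobenius

variable {R : Type*} [CommRing R] {p : ℕ} [Fact p.Prime] [CharP R p]

lemma add_pow_pow_pow_char (x y : R) (l i : ℕ) :
    (x + y) ^ (p ^ l) ^ i = x ^ (p ^ l) ^ i + y ^ (p ^ l) ^ i := by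
  simp only [← pow_mul, add_pow_char_pow]

lemma frobTrace_pow_char_pow (l i : ℕ) (y : R) :
    frobTrace (p ^ l) i y ^ p ^ l = frobTrace (p ^ l) (i + 1) y - y := by
  rw [frobTrace, frobTrace, sum_pow_char_pow, sum_range_succ', pow_zero, pow_one,
    add_sub_cancel_right]
  simp only [← pow_mul, pow_succ]

end Frobenius

lemma dvd_mul_of_eq_mul_gcd {k l n : ℕ} (h : k = n * Nat.gcd l k) : k ∣ l * n := by
  obtain ⟨t, ht⟩ := Nat.gcd_dvd_left l k
  refine ⟨t, ?_⟩
  calc l * n = Nat.gcd l k * t * n := by rw [← ht]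
    _ = n * Nat.gcd l k * t := by ring
    _ = k * t := by rw [← h]

lemma eq_zero_of_dvd_mul_of_eq_mul_gcd {k l n i : ℕ} (hk : 0 < k) (h : k = n * Nat.gcd l k)
    (hi : i < n) (hdvd : k ∣ l * i) : i = 0 := by
  have hg : 0 < Nat.gcd l k := Nat.gcd_pos_of_pos_right l hk
  have hcop := Nat.coprime_div_gcd_div_gcd (m := l) hg
  obtain ⟨t, ht⟩ := Nat.gcd_dvd_left l k
  generalize Nat.gcd l k = g at *
  subst ht h
  rw [Nat.mul_div_cancel_left t hg, Nat.mul_div_cancel _ hg] at hcop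
  rw [mul_comm n, mul_assoc] at hdvd
  exact Nat.eq_zero_of_dvd_of_lt (hcop.symm.dvd_of_dvd_mul_left
    (Nat.dvd_of_mul_dvd_mul_left hg hdvd)) hi

section FiniteField

variable {F : Type*} [Field F] [Fintype F] {p k l n : ℕ}

lemma pos_of_card_eq_pow (hF : Fintype.card F = p ^ k) : 0 < k := by
  have := hF ▸ Fintype.one_lt_card (α := F)
  rcases k with _ | k
  · simp at this
  · omega

lemma pow_eq_iff_eq_pow_pow_sub_one (hF : Fintype.card F = p ^ k) (x s : F) :
    x ^ p = s ↔ x = s ^ p ^ (k - 1) := by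
  have hk : p ^ k = p * p ^ (k - 1) := by
    rw [← pow_succ', Nat.sub_add_cancel (pos_of_card_eq_pow hF)]
  constructor
  · rintro rfl
    rw [← pow_mul, ← hk, ← hF, FiniteField.pow_card]
  · rintro rfl
    rw [← pow_mul, mul_comm, ← hk, ← hF, FiniteField.pow_card]

lemma pow_pow_pow_eq_self_of_dvd (hF : Fintype.card F = p ^ k) (h : k ∣ l * n) (y : F) :
    y ^ (p ^ l) ^ n = y := by
  obtain ⟨c, hc⟩ := h
  rw [← pow_mul, hc, pow_mul, ← hF, FiniteField.pow_card_pow]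

variable [Fact p.Prime]

-- The exponents `(p ^ l) ^ i` reduce to `p ^ (l * i % k)`, distinct from `1` for `0 < i < n`,
-- so this is the value of a nonzero polynomial of degree `< p ^ k = #F`.
theorem exists_sum_mul_pow_pow_ne_zero (hF : Fintype.card F = p ^ k)
    (hkn : k = n * Nat.gcd l k) (g : ℕ → F) (hg : g 0 ≠ 0) :
    ∃ c : F, ∑ i ∈ range n, g i * c ^ (p ^ l) ^ i ≠ 0 := by
  have hk := pos_of_card_eq_pow hF
  have hp := (Fact.out : p.Prime).one_lt
  have hn : 0 < n := Nat.pos_of_ne_zero (by rintro rfl; omega)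
  have hpow (c : F) (i : ℕ) : c ^ (p ^ l) ^ i = c ^ p ^ (l * i % k) := by
    conv_lhs => rw [← pow_mul, ← Nat.div_add_mod (l * i) k, pow_add, pow_mul, pow_mul, ← hF,
      FiniteField.pow_card_pow]
  let f : F[X] := ∑ i ∈ range n, monomial (p ^ (l * i % k)) (g i)
  have hcoeff : f.coeff 1 = g 0 := by
    rw [finsetSum_coeff, sum_eq_single_of_mem 0 (mem_range.mpr hn)]
    · simp
    · intro i hi hi0
      rw [coeff_monomial, if_neg]
      rw [Nat.pow_eq_one]
      rintro (hp1 | hmod)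
      · omega
      · exact hi0 (eq_zero_of_dvd_mul_of_eq_mul_gcd hk hkn (mem_range.mp hi)
          (Nat.dvd_of_mod_eq_zero hmod))
  have hdeg : f.natDegree < Fintype.card F := by
    refine (natDegree_sum_le_of_forall_le _ _ (n := p ^ (k - 1)) fun i _ => ?_).trans_lt ?_
    · exact (natDegree_monomial_le _).trans
        (Nat.pow_le_pow_right (by omega) (Nat.le_pred_of_lt (Nat.mod_lt _ hk)))
    · rw [hF]
      exact Nat.pow_lt_pow_right hp (by omega)
  obtain ⟨c, hc⟩ := f.exists_eval_ne_zero_of_natDegree_lt_card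
    (fun h => hg (by rw [← hcoeff, h, coeff_zero])) (by simpa using hdeg)
  refine ⟨c, ?_⟩
  simpa [f, eval_finsetSum, hpow] using hc

variable [CharP F p]

-- `hkn` says that `y ↦ y ^ p ^ l` has order `n` on `F`; the next two results are Hilbert's
-- Theorem 90 for it, in its additive and multiplicative form.
theorem exists_pow_sub_eq_of_frobTrace_eq_zero (hF : Fintype.card F = p ^ k)
    (hkn : k = n * Nat.gcd l k) {z : F} (hz : frobTrace (p ^ l) n z = 0) :
    ∃ v : F, v ^ p ^ l - v = z := by
  have hper := pow_pow_pow_eq_self_of_dvd hF (dvd_mul_of_eq_mul_gcd hkn)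
  obtain ⟨θ, hθ⟩ := exists_sum_mul_pow_pow_ne_zero hF hkn (fun _ => 1) one_ne_zero
  simp only [one_mul] at hθ
  set T := frobTrace (p ^ l) n θ
  have hT : T ^ p ^ l = T := by
    rw [frobTrace_pow_char_pow, frobTrace_succ, hper, add_sub_cancel_right]
  set v := ∑ i ∈ range n, frobTrace (p ^ l) i z * θ ^ (p ^ l) ^ i
  have hshift := sum_range_succ_eq_of_eq (fun i => frobTrace (p ^ l) i z * θ ^ (p ^ l) ^ i)
    (n := n) (by simp [hz])
  have hshiftT := sum_range_succ_eq_of_eq (fun i => θ ^ (p ^ l) ^ i) (n := n) (by simp [hper])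
  have hv : v ^ p ^ l = v - z * T :=
    calc v ^ p ^ l = ∑ i ∈ range n, (frobTrace (p ^ l) (i + 1) z * θ ^ (p ^ l) ^ (i + 1)
          - z * θ ^ (p ^ l) ^ (i + 1)) := by
          rw [sum_pow_char_pow]
          refine sum_congr rfl fun i _ => ?_
          rw [mul_pow, frobTrace_pow_char_pow, pow_succ (p ^ l) i, pow_mul]
          ring
      _ = v - z * T := by rw [sum_sub_distrib, ← mul_sum, hshift, hshiftT]; rfl
  have hT0 : T ≠ 0 := hθ
  refine ⟨-(v / T), ?_⟩
  rw [neg_eq_zero_sub, sub_pow_char_pow, zero_pow (pow_ne_zero _ (Fact.out : p.Prime).ne_zero),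
    div_pow, hv, hT]
  field_simp
  ring

theorem exists_pow_eq_mul_of_frobNorm_eq_one (hF : Fintype.card F = p ^ k)
    (hkn : k = n * Nat.gcd l k) {w : F} (hw : frobNorm (p ^ l) n w = 1) :
    ∃ γ : F, γ ≠ 0 ∧ γ ^ p ^ l = γ * w := by
  have hper := pow_pow_pow_eq_self_of_dvd hF (dvd_mul_of_eq_mul_gcd hkn)
  obtain ⟨c, hc⟩ := exists_sum_mul_pow_pow_ne_zero hF hkn (fun i => frobNorm (p ^ l) i w)
    (by simp)
  set μ := ∑ i ∈ range n, frobNorm (p ^ l) i w * c ^ (p ^ l) ^ i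
  have hμ : w * μ ^ p ^ l = μ :=
    calc w * μ ^ p ^ l
        = ∑ i ∈ range n, frobNorm (p ^ l) (i + 1) w * c ^ (p ^ l) ^ (i + 1) := by
          rw [sum_pow_char_pow, mul_sum]
          refine sum_congr rfl fun i _ => ?_
          rw [mul_pow, frobNorm_succ', pow_succ (p ^ l) i, pow_mul]
          ring
      _ = μ := sum_range_succ_eq_of_eq (fun i => frobNorm (p ^ l) i w * c ^ (p ^ l) ^ i)
          (by simp [hw, hper])
  have hμq : μ ^ p ^ l ≠ 0 := pow_ne_zero _ hc
  refine ⟨μ⁻¹, inv_ne_zero hc, ?_⟩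
  rw [inv_pow]
  field_simp
  linear_combination -hμ

end FiniteField

section Cseq

variable {F : Type*} [Field F] (l : ℕ) (a : F)

@[simp] lemma Cseq_zero : Cseq l a 0 = 0 := rfl
@[simp] lemma Cseq_one : Cseq l a 1 = 1 := rfl
@[simp] lemma Cseq_two : Cseq l a 2 = 1 := rfl

lemma Cseq_add_two (m : ℕ) :
    Cseq l a (m + 2) = Cseq l a (m + 1) + a ^ (2 ^ l) ^ m * Cseq l a m := by
  cases m with
  | zero => simp [Cseq]
  | succ m => rw [← pow_mul, mul_comm l]; rfl

variable [CharP F 2]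

lemma Cseq_add_two_pow (m : ℕ) : Cseq l a (m + 2) ^ 2 ^ l
    = Cseq l a (m + 1) ^ 2 ^ l + a ^ (2 ^ l) ^ (m + 1) * Cseq l a m ^ 2 ^ l := by
  rw [Cseq_add_two, add_pow_char_pow, mul_pow, ← pow_mul, ← pow_succ]

lemma Cseq_add_two_eq_pow (m : ℕ) : Cseq l a (m + 2)
    = Cseq l a (m + 1) ^ 2 ^ l + a ^ 2 ^ l * (Cseq l a m ^ 2 ^ l) ^ 2 ^ l := by
  induction m using Nat.twoStepInduction with
  | zero => simp
  | one => simp [Cseq_add_two]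
  | more m ih ih' =>
    have e : (Cseq l a (m + 2) ^ 2 ^ l) ^ 2 ^ l
        = (Cseq l a (m + 1) ^ 2 ^ l) ^ 2 ^ l
          + a ^ (2 ^ l) ^ (m + 2) * (Cseq l a m ^ 2 ^ l) ^ 2 ^ l := by
      rw [Cseq_add_two_pow, add_pow_char_pow, mul_pow, ← pow_mul a, ← pow_succ]
    rw [Cseq_add_two l a (m + 2), Cseq_add_two_pow l a (m + 1), e]
    linear_combination ih' + a ^ (2 ^ l) ^ (m + 2) * ih

lemma Cseq_det (m : ℕ) : a * (Cseq l a (m + 2) * Cseq l a m ^ 2 ^ l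
    + Cseq l a (m + 1) ^ 2 ^ l * Cseq l a (m + 1)) = frobNorm (2 ^ l) (m + 1) a := by
  have h2 : (2 : F) = 0 := CharTwo.two_eq_zero
  induction m with
  | zero => simp [frobNorm, Cseq_add_two]
  | succ m ih =>
    rw [frobNorm_succ, ← ih, Cseq_add_two l a (m + 1), Cseq_add_two_pow]
    linear_combination (a * Cseq l a (m + 2) * Cseq l a (m + 1) ^ 2 ^ l) * h2

end Cseq

section Root

variable {F : Type*} [Field F] {l : ℕ} {a x : F}

lemma ne_zero_of_root (ha : a ≠ 0) (hx : x ^ (2 ^ l + 1) + x + a = 0) : x ≠ 0 := by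
  rintro rfl
  simp_all

variable [CharP F 2]

lemma pow_mul_self_eq_of_root (hx : x ^ (2 ^ l + 1) + x + a = 0) : x ^ 2 ^ l * x = x + a := by
  rw [← pow_succ]
  linear_combination hx - (x + a) * CharTwo.two_eq_zero (R := F)

lemma frobNorm_add_two_of_root (hx : x ^ (2 ^ l + 1) + x + a = 0) (i : ℕ) :
    frobNorm (2 ^ l) (i + 2) x
      = frobNorm (2 ^ l) (i + 1) x + a ^ (2 ^ l) ^ i * frobNorm (2 ^ l) i x := by
  have hconj : x ^ (2 ^ l) ^ i * x ^ (2 ^ l) ^ (i + 1) = x ^ (2 ^ l) ^ i + a ^ (2 ^ l) ^ i := by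
    rw [pow_succ', pow_mul, ← mul_pow, mul_comm, pow_mul_self_eq_of_root hx, add_pow_pow_pow_char]
  rw [frobNorm_succ, frobNorm_succ, mul_assoc, hconj]
  ring

lemma frobNorm_eq_Cseq (hx : x ^ (2 ^ l + 1) + x + a = 0) (i : ℕ) :
    frobNorm (2 ^ l) (i + 1) x = Cseq l a (i + 1) * x + a * Cseq l a i ^ 2 ^ l := by
  induction i using Nat.twoStepInduction with
  | zero => simp [frobNorm]
  | one =>
    rw [frobNorm_add_two_of_root hx 0]
    simp [frobNorm]
  | more i ih ih' =>
    rw [frobNorm_add_two_of_root hx (i + 1), ih, ih', Cseq_add_two l a (i + 1),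
      Cseq_add_two_pow]
    ring

lemma Cseq_frobNorm_det (hx : x ^ (2 ^ l + 1) + x + a = 0) (j : ℕ) :
    Cseq l a (j + 1) * frobNorm (2 ^ l) (j + 2) x + Cseq l a (j + 2) * frobNorm (2 ^ l) (j + 1) x
      = frobNorm (2 ^ l) (j + 1) a := by
  have h2 : (2 : F) = 0 := CharTwo.two_eq_zero
  rw [frobNorm_eq_Cseq hx, frobNorm_eq_Cseq hx, ← Cseq_det]
  linear_combination Cseq l a (j + 1) * Cseq l a (j + 2) * x * h2

variable {m : ℕ}

lemma Cseq_mul_sq_add_Zseq_mul_add_eq_zero (hx : x ^ (2 ^ l + 1) + x + a = 0)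
    (hxper : x ^ (2 ^ l) ^ (m + 1) = x) :
    Cseq l a (m + 1) * x ^ 2 + Zseq l (m + 1) a * x + a * Cseq l a (m + 1) ^ 2 ^ l = 0 := by
  have h2 : (2 : F) = 0 := CharTwo.two_eq_zero
  have h := frobNorm_succ (2 ^ l) (m + 1) x
  rw [hxper, frobNorm_eq_Cseq hx, frobNorm_eq_Cseq hx] at h
  rw [Zseq, Nat.add_sub_cancel]
  linear_combination -h + (Cseq l a (m + 2) * x + a * Cseq l a (m + 1) ^ 2 ^ l) * h2

end Root

section UniqueRoot

variable {F : Type*} [Field F] [CharP F 2] {l m : ℕ} {a : F}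

lemma pow_mul_Cseq_pow_pow_eq (hper : a ^ (2 ^ l) ^ (m + 1) = a) :
    a ^ 2 ^ l * (Cseq l a (m + 1) ^ 2 ^ l) ^ 2 ^ l
    = Zseq l (m + 1) a + a * Cseq l a (m + 1) + Cseq l a (m + 1) ^ 2 ^ l := by
  have h2 : (2 : F) = 0 := CharTwo.two_eq_zero
  have h3 := Cseq_add_two_eq_pow l a (m + 1)
  rw [Cseq_add_two, hper, Cseq_add_two_pow, hper] at h3
  rw [Zseq, Nat.add_sub_cancel]
  linear_combination -h3 - (a * Cseq l a m ^ 2 ^ l + Cseq l a (m + 1) ^ 2 ^ l) * h2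

lemma root_iff_sq_eq (hper : ∀ y : F, y ^ (2 ^ l) ^ (m + 1) = y) (hZ : Zseq l (m + 1) a = 0)
    (hC : Cseq l a (m + 1) ≠ 0) (x : F) :
    x ^ (2 ^ l + 1) + x + a = 0 ↔ x ^ 2 = a * Cseq l a (m + 1) ^ (2 ^ l - 1) := by
  have h2 : (2 : F) = 0 := CharTwo.two_eq_zero
  have hid := pow_mul_Cseq_pow_pow_eq (hper a)
  set C := Cseq l a (m + 1)
  have hCQ : C ^ (2 ^ l - 1) * C = C ^ 2 ^ l := pow_sub_one_mul (by positivity) C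
  constructor
  · intro hx
    have hq := Cseq_mul_sq_add_Zseq_mul_add_eq_zero hx (hper x)
    rw [hZ] at hq
    apply mul_right_cancel₀ hC
    linear_combination hq + a * hCQ - a * C * C ^ (2 ^ l - 1) * h2
  · intro hs
    have hsC : x ^ 2 * C = a * C ^ 2 ^ l := by rw [hs, mul_assoc, hCQ]
    have key : ((x ^ 2) ^ (2 ^ l + 1) + x ^ 2 + a ^ 2) * C ^ (2 ^ l + 1) = 0 :=
      calc ((x ^ 2) ^ (2 ^ l + 1) + x ^ 2 + a ^ 2) * C ^ (2 ^ l + 1)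
          = (x ^ 2 * C) ^ 2 ^ l * (x ^ 2 * C) + x ^ 2 * C * C ^ 2 ^ l
            + a ^ 2 * C ^ (2 ^ l + 1) := by ring
        _ = a * C ^ 2 ^ l * (a ^ 2 ^ l * (C ^ 2 ^ l) ^ 2 ^ l + C ^ 2 ^ l + a * C) := by
          rw [hsC]; ring
        _ = 0 := by
          rw [hid, hZ]
          linear_combination a * C ^ 2 ^ l * (a * C + C ^ 2 ^ l) * h2
    have hsq : (x ^ (2 ^ l + 1) + x + a) ^ 2 = 0 := by
      rw [CharTwo.add_sq, CharTwo.add_sq, ← pow_mul, mul_comm, pow_mul]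
      exact (mul_eq_zero.mp key).resolve_right (pow_ne_zero _ hC)
    exact pow_eq_zero_iff two_ne_zero |>.mp hsq

end UniqueRoot

section OtherRoot

variable {F : Type*} [Field F] [CharP F 2] {l m : ℕ} {a x : F}

lemma exists_root_ne_of_Zseq_ne_zero (ha : a ≠ 0) (hx : x ^ (2 ^ l + 1) + x + a = 0)
    (hper : ∀ y : F, y ^ (2 ^ l) ^ (m + 1) = y) (hC : Cseq l a (m + 1) ≠ 0)
    (hZ : Zseq l (m + 1) a ≠ 0) : ∃ y, y ≠ x ∧ y ^ (2 ^ l + 1) + y + a = 0 := by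
  have h2 : (2 : F) = 0 := CharTwo.two_eq_zero
  have hx0 := ne_zero_of_root ha hx
  have hxQ := pow_mul_self_eq_of_root hx
  have hq := Cseq_mul_sq_add_Zseq_mul_add_eq_zero hx (hper x)
  have hid := pow_mul_Cseq_pow_pow_eq (hper a)
  set C := Cseq l a (m + 1)
  set Z := Zseq l (m + 1) a
  have hCQ : C ^ 2 ^ l ≠ 0 := pow_ne_zero _ hC
  have hxQ0 : x ^ 2 ^ l ≠ 0 := pow_ne_zero _ hx0
  -- the other root of `C X² + Z X + a C ^ 2 ^ l`
  refine ⟨a * C ^ 2 ^ l / (C * x), fun hyx => hZ ?_, ?_⟩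
  · rw [div_eq_iff (mul_ne_zero hC hx0)] at hyx
    refine (mul_eq_zero.mp (?_ : Z * x = 0)).resolve_right hx0
    linear_combination hq - hyx - x ^ 2 * C * h2
  · have hB : a ^ 2 ^ l * (C ^ 2 ^ l) ^ 2 ^ l = C * x + a * C + C ^ 2 ^ l * x ^ 2 ^ l := by
      apply mul_right_cancel₀ hx0
      linear_combination x * hid + hq + C ^ 2 ^ l * hxQ
        + (C ^ 2 ^ l * x - C * x ^ 2 - C ^ 2 ^ l * x * x ^ 2 ^ l) * h2
    have hyQ : (a * C ^ 2 ^ l / (C * x)) ^ 2 ^ l + 1 = C * x / C ^ 2 ^ l := by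
      rw [div_pow, mul_pow, mul_pow, hB]
      field_simp
      linear_combination C * hxQ + (C * x - C * x * x ^ 2 ^ l + C * a + C ^ 2 ^ l * x ^ 2 ^ l) * h2
    calc (a * C ^ 2 ^ l / (C * x)) ^ (2 ^ l + 1) + a * C ^ 2 ^ l / (C * x) + a
        = a * C ^ 2 ^ l / (C * x) * ((a * C ^ 2 ^ l / (C * x)) ^ 2 ^ l + 1) + a := by ring
      _ = a + a := by rw [hyQ]; field_simp
      _ = 0 := CharTwo.add_self_eq_zero a

end OtherRoot

section CseqZero

variable {F : Type*} [Field F] [CharP F 2] {l m : ℕ} {a x : F}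

lemma root_add_inv (hx : x ^ (2 ^ l + 1) + x + a = 0) {s : F}
    (hs : (x ^ 2 ^ l + 1) * s ^ 2 ^ l + x * s + 1 = 0) :
    (x + s⁻¹) ^ (2 ^ l + 1) + (x + s⁻¹) + a = 0 := by
  have hs0 : s ≠ 0 := by
    rintro rfl
    simp at hs
  have key : s ^ (2 ^ l + 1) * ((x + s⁻¹) ^ (2 ^ l + 1) + (x + s⁻¹) + a)
      = s ^ (2 ^ l + 1) * (x ^ (2 ^ l + 1) + x + a)
        + ((x ^ 2 ^ l + 1) * s ^ 2 ^ l + x * s + 1) := by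
    rw [pow_succ, pow_succ, add_pow_char_pow, inv_pow]
    field_simp
    ring
  rw [hx, hs, mul_zero, add_zero] at key
  exact (mul_eq_zero.mp key).resolve_left (pow_ne_zero _ hs0)

lemma Zseq_eq_zero_of_Cseq_eq_zero (ha : a ≠ 0) (hx : x ^ (2 ^ l + 1) + x + a = 0)
    (hxper : x ^ (2 ^ l) ^ (m + 1) = x) (hC : Cseq l a (m + 1) = 0) : Zseq l (m + 1) a = 0 := by
  have hq := Cseq_mul_sq_add_Zseq_mul_add_eq_zero hx hxper
  simpa [hC, ne_zero_of_root ha hx] using hq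

lemma frobNorm_sq_eq_of_Cseq_eq_zero (ha : a ≠ 0) (hx : x ^ (2 ^ l + 1) + x + a = 0)
    (hxper : x ^ (2 ^ l) ^ (m + 1) = x) (hC : Cseq l a (m + 1) = 0) :
    frobNorm (2 ^ l) (m + 1) x ^ 2 = frobNorm (2 ^ l) (m + 1) a := by
  have h2 : (2 : F) = 0 := CharTwo.two_eq_zero
  have hZ := Zseq_eq_zero_of_Cseq_eq_zero ha hx hxper hC
  have hdet := Cseq_frobNorm_det hx m
  have hM := frobNorm_eq_Cseq hx m
  rw [Zseq, Nat.add_sub_cancel] at hZ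
  rw [hC, zero_mul, zero_add] at hdet hM
  rw [← hdet, hM]
  linear_combination (-a * Cseq l a m ^ 2 ^ l) * hZ + a ^ 2 * (Cseq l a m ^ 2 ^ l) ^ 2 * h2

lemma Cseq_div_frobNorm (ha : a ≠ 0) (hx : x ^ (2 ^ l + 1) + x + a = 0) (i : ℕ) :
    Cseq l a i / frobNorm (2 ^ l) i x
      = ∑ j ∈ range i,
          frobNorm (2 ^ l) j a / (frobNorm (2 ^ l) j x * frobNorm (2 ^ l) (j + 1) x) := by
  have h2 : (2 : F) = 0 := CharTwo.two_eq_zero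
  have hM := frobNorm_ne_zero (2 ^ l) (ne_zero_of_root ha hx)
  induction i using Nat.twoStepInduction with
  | zero => simp
  | one => simp [frobNorm]
  | more i _ ih =>
    rw [sum_range_succ, ← ih, ← Cseq_frobNorm_det hx i]
    have := hM (i + 1)
    have := hM (i + 2)
    field_simp
    linear_combination -(Cseq l a (i + 1) * frobNorm (2 ^ l) (i + 2) x) * h2

lemma frobTrace_inv_mul_eq_Cseq_div (ha : a ≠ 0) (hx : x ^ (2 ^ l + 1) + x + a = 0) {γ : F}
    (hγ0 : γ ≠ 0) (hγ : γ ^ 2 ^ l = γ * (x ^ 2 / a)) (i : ℕ) :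
    frobTrace (2 ^ l) i (x * γ)⁻¹ = Cseq l a i / (γ * frobNorm (2 ^ l) i x) := by
  have hM := frobNorm_ne_zero (2 ^ l) (ne_zero_of_root ha hx)
  have hMa := frobNorm_ne_zero (2 ^ l) ha
  rw [mul_comm γ, ← div_div, Cseq_div_frobNorm ha hx, sum_div, frobTrace]
  refine sum_congr rfl fun j _ => ?_
  rw [inv_pow, mul_pow, pow_pow_eq_mul_frobNorm _ hγ, frobNorm_div, frobNorm_pow,
    frobNorm_succ _ j x]
  have := hM j
  have := hMa j
  field_simp

end CseqZero

section SecondRoot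

variable {F : Type*} [Field F] [Fintype F] [CharP F 2] {k l m : ℕ} {a x : F}

-- `x + s⁻¹` is a root once `(x ^ 2 ^ l + 1) s ^ 2 ^ l + x s + 1 = 0`. Writing `s = γ v` with
-- `γ ^ (2 ^ l - 1) = x² / a` turns this into `v ^ 2 ^ l - v = (x γ)⁻¹`, and `C_n = 0` makes the
-- trace of `(x γ)⁻¹` vanish.
lemma exists_root_ne_of_Cseq_eq_zero (hF : Fintype.card F = 2 ^ k)
    (hkn : k = (m + 1) * Nat.gcd l k) (ha : a ≠ 0) (hx : x ^ (2 ^ l + 1) + x + a = 0)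
    (hC : Cseq l a (m + 1) = 0) : ∃ y, y ≠ x ∧ y ^ (2 ^ l + 1) + y + a = 0 := by
  have h2 : (2 : F) = 0 := CharTwo.two_eq_zero
  have hper := pow_pow_pow_eq_self_of_dvd hF (dvd_mul_of_eq_mul_gcd hkn)
  have hx0 := ne_zero_of_root ha hx
  obtain ⟨γ, hγ0, hγ⟩ := exists_pow_eq_mul_of_frobNorm_eq_one hF hkn (w := x ^ 2 / a) (by
    rw [frobNorm_div, frobNorm_pow, frobNorm_sq_eq_of_Cseq_eq_zero ha hx (hper x) hC,
      div_self (frobNorm_ne_zero _ ha _)])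
  obtain ⟨v, hv⟩ := exists_pow_sub_eq_of_frobTrace_eq_zero hF hkn (z := (x * γ)⁻¹) (by
    rw [frobTrace_inv_mul_eq_Cseq_div ha hx hγ0 hγ, hC, zero_div])
  have hγx : (x ^ 2 ^ l + 1) * γ ^ 2 ^ l = x * γ := by
    rw [hγ]
    field_simp
    linear_combination hx - a * h2
  have hs : (x ^ 2 ^ l + 1) * (γ * v) ^ 2 ^ l + x * (γ * v) + 1 = 0 := by
    rw [mul_pow, ← mul_assoc, hγx]
    linear_combination
      x * γ * hv + mul_inv_cancel₀ (mul_ne_zero hx0 hγ0) + (x * γ * v + 1) * h2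
  refine ⟨x + (γ * v)⁻¹, ?_, root_add_inv hx hs⟩
  intro h
  rw [add_eq_left, inv_eq_zero] at h
  simp [h] at hs

lemma exists_root_ne (hF : Fintype.card F = 2 ^ k) (hkn : k = (m + 1) * Nat.gcd l k)
    (ha : a ≠ 0) (hx : x ^ (2 ^ l + 1) + x + a = 0)
    (h : ¬(Zseq l (m + 1) a = 0 ∧ Cseq l a (m + 1) ≠ 0)) :
    ∃ y, y ≠ x ∧ y ^ (2 ^ l + 1) + y + a = 0 := by
  by_cases hC : Cseq l a (m + 1) = 0
  · exact exists_root_ne_of_Cseq_eq_zero hF hkn ha hx hC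
  · exact exists_root_ne_of_Zseq_ne_zero ha hx
      (pow_pow_pow_eq_self_of_dvd hF (dvd_mul_of_eq_mul_gcd hkn)) hC fun hZ => h ⟨hZ, hC⟩

end SecondRoot

theorem stmt_13_general (k l d n : ℕ) (hlk : l < k) (hd : Nat.gcd l k = d) (hk : k = n * d)
    (F : Type*) [Field F] [Fintype F] [DecidableEq F] (hF : Fintype.card F = 2 ^ k)
    (a : F) (ha : a ≠ 0) :
    ((Finset.univ.filter (fun x : F => x ^ (2 ^ l + 1) + x + a = 0)).card = 1 ↔
      (Zseq l n a = 0 ∧ Cseq l a n ≠ 0)) ∧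
    (Zseq l n a = 0 → Cseq l a n ≠ 0 →
      ∀ x : F, x ^ (2 ^ l + 1) + x + a = 0 ↔
        x = (a * (Cseq l a n) ^ (2 ^ l - 1)) ^ (2 ^ (k - 1))) := by
  have : CharP F 2 := charP_of_card_eq_prime_pow hF
  have hkn : k = n * Nat.gcd l k := by rw [hd]; exact hk
  have hn : n ≠ 0 := by
    rintro rfl
    omega
  obtain ⟨m, rfl⟩ : ∃ m, n = m + 1 := ⟨n - 1, by omega⟩
  have hper := pow_pow_pow_eq_self_of_dvd hF (dvd_mul_of_eq_mul_gcd hkn)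
  have hroots (hZ : Zseq l (m + 1) a = 0) (hC : Cseq l a (m + 1) ≠ 0) (x : F) :
      x ^ (2 ^ l + 1) + x + a = 0 ↔ x = (a * Cseq l a (m + 1) ^ (2 ^ l - 1)) ^ 2 ^ (k - 1) :=
    (root_iff_sq_eq hper hZ hC x).trans (pow_eq_iff_eq_pow_pow_sub_one hF _ _)
  refine ⟨⟨fun h1 => ?_, fun ⟨hZ, hC⟩ => ?_⟩, hroots⟩
  · obtain ⟨x, hx⟩ := card_eq_one.mp h1
    have hmem (y : F) : y ^ (2 ^ l + 1) + y + a = 0 ↔ y = x := by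
      simpa using Finset.ext_iff.mp hx y
    by_contra h
    obtain ⟨y, hyx, hy⟩ := exists_root_ne hF hkn ha ((hmem x).mpr rfl) h
    exact hyx ((hmem y).mp hy)
  · exact card_eq_one.mpr ⟨(a * Cseq l a (m + 1) ^ (2 ^ l - 1)) ^ 2 ^ (k - 1), by
      ext x
      simp [hroots hZ hC]⟩

/-- `P_a` has exactly one zero in `GF(2^k)` iff `Z_n(a) = 0` and
`C_n(a) ≠ 0`; in this case the unique zero equals `(a C_n(a)^(2^l-1))^(2^(k-1))`. -/
theorem stmt_13 (k l d n : ℕ) (hlk : l < k) (hd : Nat.gcd l k = d) (hk : k = n * d)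
    (hn : 1 < n)
    (F : Type*) [Field F] [Fintype F] [DecidableEq F] (hF : Fintype.card F = 2 ^ k)
    (a : F) (ha : a ≠ 0) :
    ((Finset.univ.filter (fun x : F => x ^ (2 ^ l + 1) + x + a = 0)).card = 1 ↔
      (Zseq l n a = 0 ∧ Cseq l a n ≠ 0)) ∧
    (Zseq l n a = 0 → Cseq l a n ≠ 0 →
      ∀ x : F, x ^ (2 ^ l + 1) + x + a = 0 ↔
        x = (a * (Cseq l a n) ^ (2 ^ l - 1)) ^ (2 ^ (k - 1))) :=
  stmt_13_general k l d n hlk hd hk F hF a ha
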